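/- Let d be a positive integer and let W be a real d×d matrix such that Tr(exp(W∘W)) = d, where W∘W is the Hadamard (entrywise) square of W. Then W∘W is nilpotent: (W∘W)^d = 0. -/

import Mathlib

/-!
The matrix `A = W ⊙ W` is entrywise nonnegative, hence so are all its powers and their traces.
In `Tr (exp A) = ∑ₖ Tr (Aᵏ) / k!` the term `k = 0` already equals `d`, so `Tr (Aᵏ) = 0` for every
`k ≥ 1`; by nonnegativity the diagonal of every positive power of `A` vanishes. Reading `A` as the
weighted digraph of its positive entries, this says there is no cycle, so no path has length `d`,
i.e. every entry of `A ^ d` is zero.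
-/

open scoped Matrix Nat

namespace Quiver.Path

variable {V : Type*} [Quiver V]

theorem nodup_vertices_of_forall_cycle_length_eq_zero
    (hV : ∀ (v : V) (c : Path v v), c.length = 0) {a b : V} (p : Path a b) :
    p.vertices.Nodup := by
  induction p with
  | nil => simp [vertices_nil]
  | @cons b c p e ih =>
    rw [vertices_cons, List.nodup_concat]
    refine ⟨fun hc => ?_, ih⟩
    obtain ⟨-, p₂, -⟩ := p.exists_eq_comp_of_mem_vertices hc
    simpa using hV c (p₂.cons e)

theorem length_lt_card_of_forall_cycle_length_eq_zero [Fintype V]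
    (hV : ∀ (v : V) (c : Path v v), c.length = 0) {a b : V} (p : Path a b) :
    p.length < Fintype.card V := by
  simpa [vertices_length] using (nodup_vertices_of_forall_cycle_length_eq_zero hV p).length_le_card

end Quiver.Path

namespace Matrix

variable {n : Type*} [Fintype n] [DecidableEq n]

theorem pow_card_eq_zero_of_trace_pow_eq_zero {R : Type*} [Ring R] [LinearOrder R]
    [IsStrictOrderedRing R] {A : Matrix n n R} (hA : ∀ i j, 0 ≤ A i j)
    (htr : ∀ k, 0 < k → (A ^ k).trace = 0) : A ^ Fintype.card n = 0 := by
  let := toQuiver A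
  have hdiag (k : ℕ) (hk : 0 < k) (i : n) : (A ^ k) i i = 0 :=
    (Finset.sum_eq_zero_iff_of_nonneg fun j _ => pow_apply_nonneg hA k j j).1 (htr k hk) i
      (Finset.mem_univ i)
  have hcycle (v : n) (c : Quiver.Path v v) : c.length = 0 := by
    by_contra hc
    have hpos := (pow_apply_pos_iff_nonempty_path hA c.length v v).2 ⟨⟨c, rfl⟩⟩
    exact hpos.ne' (hdiag _ (Nat.pos_of_ne_zero hc) v)
  ext i j
  refine le_antisymm (not_lt.1 fun hpos => ?_) (pow_apply_nonneg hA _ i j)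
  obtain ⟨p, hp⟩ := (pow_apply_pos_iff_nonempty_path hA _ i j).1 hpos
  exact (p.length_lt_card_of_forall_cycle_length_eq_zero hcycle).ne hp

open scoped Norms.Operator in
theorem hasSum_trace_exp {𝕂 : Type*} [RCLike 𝕂] (A : Matrix n n 𝕂) :
    HasSum (fun k => (k !⁻¹ : 𝕂) * (A ^ k).trace) (NormedSpace.exp A).trace := by
  have h := (NormedSpace.exp_series_hasSum_exp' (𝕂 := 𝕂) A).mapL
    (traceLinearMap n 𝕂 𝕂).toContinuousLinearMap
  simp only [LinearMap.coe_toContinuousLinearMap', traceLinearMap_apply, trace_smul,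
    smul_eq_mul] at h
  exact h

theorem trace_pow_eq_zero_of_trace_exp_eq_card {A : Matrix n n ℝ} (hA : ∀ i j, 0 ≤ A i j)
    (hexp : (NormedSpace.exp A).trace = Fintype.card n) {k : ℕ} (hk : 0 < k) :
    (A ^ k).trace = 0 := by
  have hterm_nonneg (m : ℕ) : 0 ≤ (m !⁻¹ : ℝ) * (A ^ m).trace :=
    mul_nonneg (by positivity) (Finset.sum_nonneg fun i _ => pow_apply_nonneg hA m i i)
  have hle := sum_le_hasSum {0, k} (fun m _ => hterm_nonneg m) (hexp ▸ hasSum_trace_exp A)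
  rw [Finset.sum_pair hk.ne, pow_zero, trace_one, Nat.factorial_zero, Nat.cast_one, inv_one,
    one_mul, add_le_iff_nonpos_right] at hle
  exact (mul_eq_zero.1 (le_antisymm hle (hterm_nonneg k))).resolve_left (by positivity)

end Matrix

theorem hadamard_sq_nilpotent_of_trace_exp_eq_general (d : ℕ)
    (W : Matrix (Fin d) (Fin d) ℝ)
    (hW : (NormedSpace.exp (W ⊙ W)).trace = (d : ℝ)) :
    (W ⊙ W) ^ d = 0 := by
  have hA (i j : Fin d) : 0 ≤ (W ⊙ W) i j := mul_self_nonneg (W i j)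
  have htr (k : ℕ) (hk : 0 < k) : ((W ⊙ W) ^ k).trace = 0 :=
    Matrix.trace_pow_eq_zero_of_trace_exp_eq_card hA (by rwa [Fintype.card_fin]) hk
  simpa using Matrix.pow_card_eq_zero_of_trace_pow_eq_zero hA htr

/-- If `W` is a real `d × d` matrix with `Tr(exp (W ∘ W)) = d`, where `∘` is the Hadamard
(entrywise) product, then `W ∘ W` is nilpotent: `(W ∘ W) ^ d = 0`. -/
theorem hadamard_sq_nilpotent_of_trace_exp_eq (d : ℕ) (hd : 0 < d)
    (W : Matrix (Fin d) (Fin d) ℝ)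
    (hW : (NormedSpace.exp (W ⊙ W)).trace = (d : ℝ)) :
    (W ⊙ W) ^ d = 0 :=
  hadamard_sq_nilpotent_of_trace_exp_eq_general d W hW
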